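/- arXiv:1109.5660 — 5 statements merged into one kernel-verified Lean document; each statement's English description precedes it below -/
import Mathlib

section
/- (Stabilizations of linear-at-infinity generating families are equivalent to linear-at-infinity ones.) Let n, K, L be natural numbers with K ≥ 1. Let f : ℝⁿ × (ℝᴷ × ℝᴸ) → ℝ be smooth, let A : ℝᴷ → ℝ be a nonzero linear functional, and let Q : ℝᴸ → ℝ be a nondegenerate quadratic form (that is, Q(η) = B(η,η) for a symmetric bilinear form B whose associated linear map ℝᴸ → (ℝᴸ)* is bijective). Suppose there is a compact set C ⊆ ℝⁿ × ℝᴷ × ℝᴸ such that f(x,ℓ,η) = A(ℓ) + Q(η) for all (x,ℓ,η) ∉ C. Then there exist a smooth fiber-preserving diffeomorphism Φ of ℝⁿ × (ℝᴷ × ℝᴸ), i.e. a smooth diffeomorphism of the form Φ(x,e) = (x, φ(x,e)) where each φ(x,·) is a diffeomorphism of ℝᴷ × ℝᴸ, and a nonzero linear functional A' : ℝᴷ × ℝᴸ → ℝ, such that the function (x,e) ↦ f(Φ(x,e)) − A'(e) has compact support; that is, f ∘ Φ is linear-at-infinity. -/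
/-- A stabilization of a linear-at-infinity generating family is equivalent (via a
fiber-preserving diffeomorphism) to a linear-at-infinity generating family. -/
theorem stmt_2 (n K L : ℕ) (hK : 1 ≤ K)
    (f : (Fin n → ℝ) × ((Fin K → ℝ) × (Fin L → ℝ)) → ℝ)
    (hf : ContDiff ℝ (⊤ : ℕ∞) f)
    (A : (Fin K → ℝ) →ₗ[ℝ] ℝ) (hA : A ≠ 0)
    (B : (Fin L → ℝ) →ₗ[ℝ] (Fin L → ℝ) →ₗ[ℝ] ℝ)
    (hBsymm : ∀ x y, B x y = B y x)
    (hBnondeg : Function.Bijective fun v => B v)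
    (hlin : ∃ C : Set ((Fin n → ℝ) × ((Fin K → ℝ) × (Fin L → ℝ))),
      IsCompact C ∧ ∀ p ∉ C, f p = A p.2.1 + B p.2.2 p.2.2) :
    ∃ Φ Ψ : (Fin n → ℝ) × ((Fin K → ℝ) × (Fin L → ℝ)) →
            (Fin n → ℝ) × ((Fin K → ℝ) × (Fin L → ℝ)),
      ContDiff ℝ (⊤ : ℕ∞) Φ ∧ ContDiff ℝ (⊤ : ℕ∞) Ψ ∧
      Function.LeftInverse Ψ Φ ∧ Function.RightInverse Ψ Φ ∧
      (∀ p, (Φ p).1 = p.1) ∧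
      ∃ A' : ((Fin K → ℝ) × (Fin L → ℝ)) →ₗ[ℝ] ℝ, A' ≠ 0 ∧
        HasCompactSupport (fun p : (Fin n → ℝ) × ((Fin K → ℝ) × (Fin L → ℝ)) =>
          f (Φ p) - A' p.2) := by
  obtain ⟨C, hC, hfC⟩ := hlin
  -- pick u with A u = 1
  obtain ⟨v, hv⟩ : ∃ v, A v ≠ 0 := by
    by_contra h
    push_neg at h
    exact hA (LinearMap.ext fun w => h w)
  set u : Fin K → ℝ := (A v)⁻¹ • v with hu
  have hAu : A u = 1 := by
    simp [hu, map_smul, inv_mul_cancel₀ hv]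
  -- Q is smooth
  have hQ : ContDiff ℝ (⊤ : ℕ∞) (fun η : Fin L → ℝ => B η η) := by
    have h1 : ContDiff ℝ (⊤ : ℕ∞) (fun p : (Fin L → ℝ) × (Fin L → ℝ) => B p.1 p.2) := by
      let B₁ : (Fin L → ℝ) →ₗ[ℝ] ((Fin L → ℝ) →L[ℝ] ℝ) :=
        { toFun := fun x => LinearMap.toContinuousLinearMap (B x)
          map_add' := fun x y => by ext z; simp
          map_smul' := fun c x => by ext z; simp }
      let B₂ := LinearMap.toContinuousLinearMap B₁
      have hb : IsBoundedBilinearMap ℝ (fun p : (Fin L → ℝ) × (Fin L → ℝ) => B₂ p.1 p.2) :=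
        B₂.isBoundedBilinearMap
      exact hb.contDiff
    exact h1.comp (contDiff_id.prodMk contDiff_id)
  -- the shear
  set Φ : (Fin n → ℝ) × ((Fin K → ℝ) × (Fin L → ℝ)) →
      (Fin n → ℝ) × ((Fin K → ℝ) × (Fin L → ℝ)) :=
    fun p => (p.1, (p.2.1 - (B p.2.2 p.2.2) • u, p.2.2)) with hΦ
  set Ψ : (Fin n → ℝ) × ((Fin K → ℝ) × (Fin L → ℝ)) →
      (Fin n → ℝ) × ((Fin K → ℝ) × (Fin L → ℝ)) :=
    fun p => (p.1, (p.2.1 + (B p.2.2 p.2.2) • u, p.2.2)) with hΨ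
  have hQp : ContDiff ℝ (⊤ : ℕ∞) (fun p : (Fin n → ℝ) × ((Fin K → ℝ) × (Fin L → ℝ)) =>
      B p.2.2 p.2.2) := hQ.comp (contDiff_snd.snd)
  have hΦs : ContDiff ℝ (⊤ : ℕ∞) Φ :=
    contDiff_fst.prodMk
      (((contDiff_snd.fst).sub (hQp.smul contDiff_const)).prodMk contDiff_snd.snd)
  have hΨs : ContDiff ℝ (⊤ : ℕ∞) Ψ :=
    contDiff_fst.prodMk
      (((contDiff_snd.fst).add (hQp.smul contDiff_const)).prodMk contDiff_snd.snd)
  have hLI : Function.LeftInverse Ψ Φ := by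
    intro p; simp [hΦ, hΨ]
  have hRI : Function.RightInverse Ψ Φ := by
    intro p; simp [hΦ, hΨ]
  refine ⟨Φ, Ψ, hΦs, hΨs, hLI, hRI, fun p => rfl, A.comp (LinearMap.fst ℝ _ _), ?_, ?_⟩
  · intro h
    apply hv
    have := LinearMap.congr_fun h (v, 0)
    simpa using this
  · apply HasCompactSupport.intro (hC.image hΨs.continuous)
    intro p hp
    have hΦp : Φ p ∉ C := by
      intro hmem
      exact hp ⟨Φ p, hmem, hLI p⟩
    rw [hfC _ hΦp]
    simp [hΦ, map_sub, map_smul, hAu]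
end

section
/- Let X be a topological space and δ : X → ℝ a continuous function. Fix real numbers t₀ < t₁ and set J = [t₀, t₁]. Let a, b : ℝ → ℝ be continuous on J with a(t) ≤ b(t) for all t ∈ J, and assume a and b are strictly increasing on J. Then the pair (B_J, A_J) deformation retracts onto (A_J ∪ B_{t₁}, A_J): there is a continuous map H : [0,1] × B_J → B_J such that H(0,p) = p for all p ∈ B_J, H(s,p) = p for every s ∈ [0,1] and every p ∈ A_J ∪ B_{t₁}, and H(1, B_J) ⊆ A_J ∪ B_{t₁}. -/
/-!
Let `g` be a continuous inverse of `a`, clamped to `J`, so that `g (δ x)` is the time at which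
the threshold `a` reaches the level `δ x` (or `t₁` if it never does). Pushing the time coordinate
of `(t, x)` linearly up to `max t (g (δ x))` stays inside `B_J` because `b` increases, fixes `A_J`
and `B_{t₁}` (there `g (δ x) ≤ t`), and ends either in `A_J` or in the slice `t = t₁`.
-/

open Set

theorem StrictMonoOn.exists_continuous_clampedInverse {a : ℝ → ℝ} {t₀ t₁ : ℝ} (ht : t₀ ≤ t₁)
    (ha : ContinuousOn a (Icc t₀ t₁)) (hmono : StrictMonoOn a (Icc t₀ t₁)) :
    ∃ g : ℝ → ℝ, Continuous g ∧ (∀ y, g y ∈ Icc t₀ t₁) ∧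
      ∀ y, a (g y) = max (a t₀) (min (a t₁) y) := by
  have hmaps : MapsTo a (Icc t₀ t₁) (Icc (a t₀) (a t₁)) := fun t ht' =>
    ⟨hmono.monotoneOn (left_mem_Icc.2 ht) ht' ht'.1,
      hmono.monotoneOn ht' (right_mem_Icc.2 ht) ht'.2⟩
  have hle : a t₀ ≤ a t₁ := (hmaps (left_mem_Icc.2 ht)).2
  let f : Icc t₀ t₁ → Icc (a t₀) (a t₁) := hmaps.restrict
  have hf : StrictMono f := fun u v huv => hmono u.2 v.2 huv
  have hsurj : Function.Surjective f := fun y => by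
    obtain ⟨t, ht', h⟩ := intermediate_value_Icc ht ha y.2
    exact ⟨⟨t, ht'⟩, Subtype.ext h⟩
  let e := hf.orderIsoOfSurjective f hsurj
  refine ⟨fun y => e.symm (projIcc (a t₀) (a t₁) hle y), ?_, fun y => (e.symm _).2, fun y => ?_⟩
  · exact continuous_subtype_val.comp (e.toHomeomorph.symm.continuous.comp continuous_projIcc)
  · have h := congrArg Subtype.val (e.apply_symm_apply (projIcc (a t₀) (a t₁) hle y))
    rwa [hf.coe_orderIsoOfSurjective, MapsTo.val_restrict_apply, coe_projIcc] at h

section ClampedInverse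

variable {a g : ℝ → ℝ} {t₀ t₁ t y : ℝ}

theorem max_clampedInverse_mem_Icc (hg : ∀ y, g y ∈ Icc t₀ t₁) (ht : t ∈ Icc t₀ t₁) :
    max t (g y) ∈ Icc t₀ t₁ :=
  ⟨ht.1.trans (le_max_left _ _), max_le ht.2 (hg y).2⟩

theorem clampedInverse_le_of_le_apply (hmono : StrictMonoOn a (Icc t₀ t₁))
    (hg : ∀ y, g y ∈ Icc t₀ t₁) (hag : ∀ y, a (g y) = max (a t₀) (min (a t₁) y))
    (ht : t ∈ Icc t₀ t₁) (hy : y ≤ a t) : g y ≤ t := by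
  refine (hmono.le_iff_le (hg y) ht).1 ?_
  rw [hag]
  exact max_le (hmono.monotoneOn (left_mem_Icc.2 (ht.1.trans ht.2)) ht ht.1)
    ((min_le_right _ _).trans hy)

theorem le_apply_max_clampedInverse_or_eq_right (hmono : StrictMonoOn a (Icc t₀ t₁))
    (hg : ∀ y, g y ∈ Icc t₀ t₁) (hag : ∀ y, a (g y) = max (a t₀) (min (a t₁) y))
    (ht : t ∈ Icc t₀ t₁) : y ≤ a (max t (g y)) ∨ max t (g y) = t₁ := by
  have ht₀₁ : t₀ ≤ t₁ := ht.1.trans ht.2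
  rcases le_or_gt y (a t₁) with hy | hy
  · refine Or.inl (le_trans ?_ (hmono.monotoneOn (hg y) (max_clampedInverse_mem_Icc hg ht)
      (le_max_right _ _)))
    rw [hag, min_eq_right hy]
    exact le_max_right _ _
  · have hgy : a (g y) = a t₁ := by
      rw [hag, min_eq_left hy.le, max_eq_right
        (hmono.monotoneOn (left_mem_Icc.2 ht₀₁) (right_mem_Icc.2 ht₀₁) ht₀₁)]
    rw [hmono.injOn (hg y) (right_mem_Icc.2 ht₀₁) hgy, max_eq_right ht.2]
    exact Or.inr rfl

end ClampedInverse

theorem stmt_5_general {X : Type*} [TopologicalSpace X] (δ : X → ℝ) (hδ : Continuous δ)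
    (t₀ t₁ : ℝ) (ht : t₀ < t₁)
    (a b : ℝ → ℝ)
    (ha : ContinuousOn a (Set.Icc t₀ t₁))
    (hamono : StrictMonoOn a (Set.Icc t₀ t₁))
    (hbmono : StrictMonoOn b (Set.Icc t₀ t₁)) :
    let AJ : Set (ℝ × X) := {p | p.1 ∈ Set.Icc t₀ t₁ ∧ δ p.2 ≤ a p.1}
    let BJ : Set (ℝ × X) := {p | p.1 ∈ Set.Icc t₀ t₁ ∧ δ p.2 ≤ b p.1}
    let Bt₁ : Set (ℝ × X) := {p | p.1 = t₁ ∧ δ p.2 ≤ b t₁}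
    ∃ H : ℝ × (ℝ × X) → ℝ × X,
      ContinuousOn H (Set.Icc (0:ℝ) 1 ×ˢ BJ) ∧
      (∀ s ∈ Set.Icc (0:ℝ) 1, ∀ p ∈ BJ, H (s, p) ∈ BJ) ∧
      (∀ p ∈ BJ, H (0, p) = p) ∧
      (∀ s ∈ Set.Icc (0:ℝ) 1, ∀ p ∈ AJ ∪ Bt₁, H (s, p) = p) ∧
      (∀ p ∈ BJ, H (1, p) ∈ AJ ∪ Bt₁) := by
  intro AJ BJ Bt₁
  obtain ⟨g, hgc, hg, hag⟩ := hamono.exists_continuous_clampedInverse ht.le ha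
  refine ⟨fun q => (q.2.1 + q.1 * (max q.2.1 (g (δ q.2.2)) - q.2.1), q.2.2),
    by fun_prop, ?_, fun p _ => by simp, ?_, ?_⟩
  · rintro s ⟨hs₀, hs₁⟩ ⟨t, x⟩ ⟨htJ, hx⟩
    have hτ₁ : max t (g (δ x)) ≤ t₁ := (max_clampedInverse_mem_Icc hg htJ).2
    have hτt : 0 ≤ max t (g (δ x)) - t := sub_nonneg.2 (le_max_left _ _)
    have hu : t ≤ t + s * (max t (g (δ x)) - t) := le_add_of_nonneg_right (mul_nonneg hs₀ hτt)
    have huJ : t + s * (max t (g (δ x)) - t) ∈ Icc t₀ t₁ :=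
      ⟨htJ.1.trans hu, by linarith [mul_le_mul_of_nonneg_right hs₁ hτt]⟩
    exact ⟨huJ, hx.trans (hbmono.monotoneOn htJ huJ hu)⟩
  · rintro s - ⟨t, x⟩ hp
    have hgt : g (δ x) ≤ t := by
      rcases hp with ⟨htJ, hx⟩ | ⟨rfl, -⟩
      · exact clampedInverse_le_of_le_apply hamono hg hag htJ hx
      · exact (hg _).2
    simp [max_eq_left hgt]
  · rintro ⟨t, x⟩ ⟨htJ, hx⟩
    simp only [one_mul, add_sub_cancel]
    rcases le_apply_max_clampedInverse_or_eq_right hamono hg hag htJ with hy | hτ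
    · exact Or.inl ⟨max_clampedInverse_mem_Icc hg htJ, hy⟩
    · exact Or.inr ⟨hτ, hx.trans (hbmono.monotoneOn htJ (right_mem_Icc.2 ht.le) htJ.2)⟩

/-- If `a ≤ b` are strictly increasing on `J = [t₀,t₁]`, then the pair `(B_J, A_J)`
of slicewise sublevel sets deformation retracts onto `(A_J ∪ B_{t₁}, A_J)`. -/
theorem stmt_5 {X : Type*} [TopologicalSpace X] (δ : X → ℝ) (hδ : Continuous δ)
    (t₀ t₁ : ℝ) (ht : t₀ < t₁)
    (a b : ℝ → ℝ)
    (ha : ContinuousOn a (Set.Icc t₀ t₁)) (hb : ContinuousOn b (Set.Icc t₀ t₁))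
    (hab : ∀ t ∈ Set.Icc t₀ t₁, a t ≤ b t)
    (hamono : StrictMonoOn a (Set.Icc t₀ t₁))
    (hbmono : StrictMonoOn b (Set.Icc t₀ t₁)) :
    let AJ : Set (ℝ × X) := {p | p.1 ∈ Set.Icc t₀ t₁ ∧ δ p.2 ≤ a p.1}
    let BJ : Set (ℝ × X) := {p | p.1 ∈ Set.Icc t₀ t₁ ∧ δ p.2 ≤ b p.1}
    let Bt₁ : Set (ℝ × X) := {p | p.1 = t₁ ∧ δ p.2 ≤ b t₁}
    ∃ H : ℝ × (ℝ × X) → ℝ × X,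
      ContinuousOn H (Set.Icc (0:ℝ) 1 ×ˢ BJ) ∧
      (∀ s ∈ Set.Icc (0:ℝ) 1, ∀ p ∈ BJ, H (s, p) ∈ BJ) ∧
      (∀ p ∈ BJ, H (0, p) = p) ∧
      (∀ s ∈ Set.Icc (0:ℝ) 1, ∀ p ∈ AJ ∪ Bt₁, H (s, p) = p) ∧
      (∀ p ∈ BJ, H (1, p) ∈ AJ ∪ Bt₁) :=
  stmt_5_general δ hδ t₀ t₁ ht a b ha hamono hbmono
end

section
/- Let X be a topological space and δ : X → ℝ a continuous function. Fix real numbers t₀ < t₁ and set J = [t₀, t₁]. Let a, b : ℝ → ℝ be continuous on J with a(t) ≤ b(t) for all t ∈ J, and assume a and b are strictly increasing on J. Then the pair (B_J, A_J) deformation retracts onto (B_{t₁}, A_{t₁}): there is a continuous map H : [0,1] × B_J → B_J such that H(0,p) = p for all p ∈ B_J, H(s,p) = p for every s ∈ [0,1] and every p ∈ B_{t₁}, H(s, A_J) ⊆ A_J for every s ∈ [0,1], H(1, B_J) ⊆ B_{t₁}, and H(1, A_J) ⊆ A_{t₁}. -/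
/-- If `a ≤ b` are strictly increasing on `J = [t₀,t₁]`, then the pair `(B_J, A_J)`
of slicewise sublevel sets deformation retracts onto `(B_{t₁}, A_{t₁})`. -/
theorem stmt_6 {X : Type*} [TopologicalSpace X] (δ : X → ℝ) (hδ : Continuous δ)
    (t₀ t₁ : ℝ) (ht : t₀ < t₁)
    (a b : ℝ → ℝ)
    (ha : ContinuousOn a (Set.Icc t₀ t₁)) (hb : ContinuousOn b (Set.Icc t₀ t₁))
    (hab : ∀ t ∈ Set.Icc t₀ t₁, a t ≤ b t)
    (hamono : StrictMonoOn a (Set.Icc t₀ t₁))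
    (hbmono : StrictMonoOn b (Set.Icc t₀ t₁)) :
    let AJ : Set (ℝ × X) := {p | p.1 ∈ Set.Icc t₀ t₁ ∧ δ p.2 ≤ a p.1}
    let BJ : Set (ℝ × X) := {p | p.1 ∈ Set.Icc t₀ t₁ ∧ δ p.2 ≤ b p.1}
    let At₁ : Set (ℝ × X) := {p | p.1 = t₁ ∧ δ p.2 ≤ a t₁}
    let Bt₁ : Set (ℝ × X) := {p | p.1 = t₁ ∧ δ p.2 ≤ b t₁}
    ∃ H : ℝ × (ℝ × X) → ℝ × X,
      ContinuousOn H (Set.Icc (0:ℝ) 1 ×ˢ BJ) ∧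
      (∀ s ∈ Set.Icc (0:ℝ) 1, ∀ p ∈ BJ, H (s, p) ∈ BJ) ∧
      (∀ p ∈ BJ, H (0, p) = p) ∧
      (∀ s ∈ Set.Icc (0:ℝ) 1, ∀ p ∈ Bt₁, H (s, p) = p) ∧
      (∀ s ∈ Set.Icc (0:ℝ) 1, ∀ p ∈ AJ, H (s, p) ∈ AJ) ∧
      (∀ p ∈ BJ, H (1, p) ∈ Bt₁) ∧
      (∀ p ∈ AJ, H (1, p) ∈ At₁) := by
  intro AJ BJ At₁ Bt₁
  refine ⟨fun q => ((1 - q.1) * q.2.1 + q.1 * t₁, q.2.2), ?_, ?_, ?_, ?_, ?_, ?_, ?_⟩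
  · apply Continuous.continuousOn
    fun_prop
  · rintro s ⟨hs0, hs1⟩ ⟨t, x⟩ ⟨⟨ht0, ht1⟩, hx⟩
    have key : t ≤ (1 - s) * t + s * t₁ := by nlinarith
    have mem : (1 - s) * t + s * t₁ ∈ Set.Icc t₀ t₁ :=
      ⟨by nlinarith, by nlinarith⟩
    exact ⟨mem, le_trans hx (hbmono.monotoneOn ⟨ht0, ht1⟩ mem key)⟩
  · rintro ⟨t, x⟩ _
    show ((1 - 0) * t + 0 * t₁, x) = (t, x)
    norm_num
  · rintro s _ ⟨t, x⟩ ⟨ht1, hx⟩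
    simp only at ht1
    show ((1 - s) * t + s * t₁, x) = (t, x)
    rw [ht1]; congr 1; ring
  · rintro s ⟨hs0, hs1⟩ ⟨t, x⟩ ⟨⟨ht0, ht1⟩, hx⟩
    have key : t ≤ (1 - s) * t + s * t₁ := by nlinarith
    have mem : (1 - s) * t + s * t₁ ∈ Set.Icc t₀ t₁ :=
      ⟨by nlinarith, by nlinarith⟩
    exact ⟨mem, le_trans hx (hamono.monotoneOn ⟨ht0, ht1⟩ mem key)⟩
  · rintro ⟨t, x⟩ ⟨⟨ht0, ht1⟩, hx⟩
    exact ⟨by simp, le_trans hx (hbmono.monotoneOn ⟨ht0, ht1⟩ (Set.right_mem_Icc.2 ht.le) ht1)⟩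
  · rintro ⟨t, x⟩ ⟨⟨ht0, ht1⟩, hx⟩
    exact ⟨by simp, le_trans hx (hamono.monotoneOn ⟨ht0, ht1⟩ (Set.right_mem_Icc.2 ht.le) ht1)⟩
end

section
/- (Deformation retraction onto a relative cone.) Let δ : ℝ^m → ℝ be a continuously differentiable function whose negative gradient flow is globally defined. Fix real numbers t₀ < t₁, set J = [t₀, t₁], and let a, b : ℝ → ℝ be continuous on J and satisfy: b(t) = b₀ := b(t₀) for all t ∈ J; a is strictly increasing on J with a(t₁) = b₀; and there exist ε > 0 and ρ > 0 such that ‖∇δ(v)‖ ≥ ρ for every v with δ(v) ∈ [a(t₀) − ε, a(t₀) + ε] (a strengthened form of the hypothesis that a(t₀) has a neighborhood of regular values of δ). Then (B_J, A_J) deformation retracts onto the relative cone on (δ^{b₀}, δ^{a(t₀)}), namely onto the pair (J × {v : δ(v) ≤ b₀}, (J × {v : δ(v) ≤ a(t₀)}) ∪ ({t₁} × {v : δ(v) ≤ b₀})): there is a continuous map H : [0,1] × B_J → B_J with H(0,p) = p for all p, H(s, A_J) ⊆ A_J for all s, H(s,p) = p whenever p ∈ J × {v : δ(v) ≤ a(t₀)},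 and H(1, A_J) ⊆ (J × {v : δ(v) ≤ a(t₀)}) ∪ ({t₁} × {v : δ(v) ≤ b₀}). (Note that here B_J = J × {v : δ(v) ≤ b₀}.) -/
/-!
Points of `δ^{b₀}` at level `d > a(t₀)` are moved by the negative gradient flow for time
`r/ρ²`, where `r = min ε (d - a(t₀))`, while their `J`-coordinate is pushed towards `t₁` by
the fraction `r/ε`. Since `δ` decreases at rate at least `ρ²` in the regular band, points of
`A_J` starting in the band `(a(t₀), a(t₀) + ε]` end in `δ^{a(t₀)}`, and those above it reach
`{t₁} × δ^{b₀}`; monotonicity of `a` keeps the deformation inside `A_J`.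
-/

open Set

section GradientDescent

variable {E : Type*} [NormedAddCommGroup E] [InnerProductSpace ℝ E] [CompleteSpace E]
  {δ : E → ℝ} {γ : ℝ → E}

theorem hasDerivAt_comp_of_hasDerivAt_neg_gradient {s : ℝ} (hδ : DifferentiableAt ℝ δ (γ s))
    (hγ : HasDerivAt γ (-gradient δ (γ s)) s) :
    HasDerivAt (δ ∘ γ) (-‖gradient δ (γ s)‖ ^ 2) s := by
  have h := hδ.hasGradientAt.hasFDerivAt.comp_hasDerivAt s hγ
  rwa [InnerProductSpace.toDual_apply_apply, inner_neg_right,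
    real_inner_self_eq_norm_sq] at h

theorem antitone_comp_of_hasDerivAt_neg_gradient (hδ : Differentiable ℝ δ)
    (hγ : ∀ s, HasDerivAt γ (-gradient δ (γ s)) s) : Antitone (δ ∘ γ) :=
  have hderiv s := hasDerivAt_comp_of_hasDerivAt_neg_gradient (hδ (γ s)) (hγ s)
  antitone_of_deriv_nonpos (fun s => (hderiv s).differentiableAt)
    fun s => (hderiv s).deriv ▸ neg_nonpos.2 (sq_nonneg _)

theorem comp_le_max_sub_of_hasDerivAt_neg_gradient (hδ : Differentiable ℝ δ)
    (hγ : ∀ s, HasDerivAt γ (-gradient δ (γ s)) s) {c c' ρ T : ℝ} (hρ : 0 ≤ ρ)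
    (hband : ∀ v, δ v ∈ Icc c c' → ρ ≤ ‖gradient δ v‖) (h0 : δ (γ 0) ≤ c') (hT : 0 ≤ T) :
    δ (γ T) ≤ max c (δ (γ 0) - ρ ^ 2 * T) := by
  have hderiv s := hasDerivAt_comp_of_hasDerivAt_neg_gradient (hδ (γ s)) (hγ s)
  have hanti := antitone_comp_of_hasDerivAt_neg_gradient hδ hγ
  rcases le_or_gt (δ (γ T)) c with hc | hc
  · exact le_max_of_le_left hc
  have hslope : ∀ u ∈ interior (Icc 0 T), deriv (δ ∘ γ) u ≤ -ρ ^ 2 := by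
    intro u hu
    rw [interior_Icc] at hu
    have hu_band : δ (γ u) ∈ Icc c c' :=
      ⟨hc.le.trans (hanti hu.2.le), (hanti hu.1.le).trans h0⟩
    rw [(hderiv u).deriv, neg_le_neg_iff]
    exact pow_le_pow_left₀ hρ (hband _ hu_band) 2
  have hmvt := (convex_Icc 0 T).image_sub_le_mul_sub_of_deriv_le
    (fun u _ => (hderiv u).continuousAt.continuousWithinAt)
    (fun u _ => (hderiv u).differentiableAt.differentiableWithinAt) hslope
    0 (left_mem_Icc.2 hT) T (right_mem_Icc.2 hT) hT
  simp only [Function.comp_apply, sub_zero] at hmvt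
  exact le_max_of_le_right (by linarith)

end GradientDescent

section ConeHomotopy

noncomputable def truncatedExcess (c ε d : ℝ) : ℝ := min ε (max 0 (d - c))

variable {c ε d : ℝ}

theorem truncatedExcess_nonneg (hε : 0 ≤ ε) : 0 ≤ truncatedExcess c ε d :=
  le_min hε (le_max_left _ _)

theorem truncatedExcess_le : truncatedExcess c ε d ≤ ε :=
  min_le_left _ _

theorem truncatedExcess_of_le (hε : 0 ≤ ε) (hd : d ≤ c) : truncatedExcess c ε d = 0 := by
  rw [truncatedExcess, max_eq_left (sub_nonpos.2 hd), min_eq_right hε]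

theorem truncatedExcess_of_add_le (hd : c + ε ≤ d) : truncatedExcess c ε d = ε :=
  min_eq_left (le_max_of_le_right (by linarith))

theorem sub_le_truncatedExcess (hd : d ≤ c + ε) : d - c ≤ truncatedExcess c ε d :=
  le_min (by linarith) (le_max_right _ _)

variable {E : Type*}

noncomputable def coneHomotopy (δ : E → ℝ) (φ : ℝ × E → E) (c ε ρ t₁ : ℝ) (q : ℝ × ℝ × E) :
    ℝ × E :=
  (q.2.1 + q.1 * (truncatedExcess c ε (δ q.2.2) / ε) * (t₁ - q.2.1),
    φ (q.1 * truncatedExcess c ε (δ q.2.2) / ρ ^ 2, q.2.2))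

variable {δ : E → ℝ} {φ : ℝ × E → E} {ρ t₀ t₁ s t : ℝ} {x : E}

theorem continuous_coneHomotopy [TopologicalSpace E] (hδ : Continuous δ) (hφ : Continuous φ) :
    Continuous (coneHomotopy δ φ c ε ρ t₁) := by
  unfold coneHomotopy truncatedExcess
  fun_prop

theorem coneHomotopy_zero (hφ0 : ∀ v, φ (0, v) = v) (p : ℝ × E) :
    coneHomotopy δ φ c ε ρ t₁ (0, p) = p := by
  simp [coneHomotopy, hφ0]

theorem coneHomotopy_of_le (hφ0 : ∀ v, φ (0, v) = v) (hε : 0 ≤ ε) (hx : δ x ≤ c) :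
    coneHomotopy δ φ c ε ρ t₁ (s, t, x) = (t, x) := by
  simp [coneHomotopy, hφ0, truncatedExcess_of_le hε hx]

theorem coneHomotopy_fraction_mem (hε : 0 < ε) (hs : s ∈ Icc (0 : ℝ) 1) :
    s * (truncatedExcess c ε d / ε) ∈ Icc (0 : ℝ) 1 := by
  have hr : truncatedExcess c ε d / ε ∈ Icc (0 : ℝ) 1 :=
    ⟨div_nonneg (truncatedExcess_nonneg hε.le) hε.le, div_le_one_of_le₀ truncatedExcess_le hε.le⟩
  exact ⟨mul_nonneg hs.1 hr.1, mul_le_one₀ hs.2 hr.1 hr.2⟩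

theorem coneHomotopy_fst_mem (hε : 0 < ε) (hs : s ∈ Icc (0 : ℝ) 1) (ht : t ∈ Icc t₀ t₁) :
    (coneHomotopy δ φ c ε ρ t₁ (s, t, x)).1 ∈ Icc t₀ t₁ := by
  simpa only [coneHomotopy, smul_eq_mul] using (convex_Icc t₀ t₁).add_smul_sub_mem ht
    (right_mem_Icc.2 (ht.1.trans ht.2)) (coneHomotopy_fraction_mem hε hs)

theorem le_coneHomotopy_fst (hε : 0 < ε) (hs : s ∈ Icc (0 : ℝ) 1) (ht : t ≤ t₁) :
    t ≤ (coneHomotopy δ φ c ε ρ t₁ (s, t, x)).1 :=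
  le_add_of_nonneg_right (mul_nonneg (coneHomotopy_fraction_mem hε hs).1 (sub_nonneg.2 ht))

theorem coneHomotopy_one_fst (hε : 0 < ε) (hx : c + ε ≤ δ x) :
    (coneHomotopy δ φ c ε ρ t₁ (1, t, x)).1 = t₁ := by
  simp [coneHomotopy, truncatedExcess_of_add_le hx, hε.ne']

variable [NormedAddCommGroup E] [InnerProductSpace ℝ E] [CompleteSpace E]

theorem coneHomotopy_snd_le (hδ : Differentiable ℝ δ) (hφ0 : ∀ v, φ (0, v) = v)
    (hφ' : ∀ v s, HasDerivAt (fun τ => φ (τ, v)) (-gradient δ (φ (s, v))) s)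
    (hε : 0 ≤ ε) (hs : 0 ≤ s) : δ (coneHomotopy δ φ c ε ρ t₁ (s, t, x)).2 ≤ δ x := by
  have hτ : 0 ≤ s * truncatedExcess c ε (δ x) / ρ ^ 2 :=
    div_nonneg (mul_nonneg hs (truncatedExcess_nonneg hε)) (sq_nonneg ρ)
  simpa [coneHomotopy, hφ0] using antitone_comp_of_hasDerivAt_neg_gradient hδ (hφ' x) hτ

theorem coneHomotopy_one_snd_le (hδ : Differentiable ℝ δ) (hφ0 : ∀ v, φ (0, v) = v)
    (hφ' : ∀ v s, HasDerivAt (fun τ => φ (τ, v)) (-gradient δ (φ (s, v))) s) (hε : 0 ≤ ε)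
    (hρ : 0 < ρ) (hband : ∀ v, δ v ∈ Icc c (c + ε) → ρ ≤ ‖gradient δ v‖) (hx : δ x ≤ c + ε) :
    δ (coneHomotopy δ φ c ε ρ t₁ (1, t, x)).2 ≤ c := by
  have hτ : 0 ≤ truncatedExcess c ε (δ x) / ρ ^ 2 :=
    div_nonneg (truncatedExcess_nonneg hε) (sq_nonneg ρ)
  have hdescent := comp_le_max_sub_of_hasDerivAt_neg_gradient hδ (hφ' x) hρ.le hband
    (by simpa [hφ0] using hx) hτ
  simp only [hφ0, mul_div_cancel₀ _ (pow_pos hρ 2).ne'] at hdescent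
  rw [max_eq_left (by linarith [sub_le_truncatedExcess hx])] at hdescent
  simpa [coneHomotopy] using hdescent

end ConeHomotopy

theorem stmt_7_general (m : ℕ) (δ : EuclideanSpace ℝ (Fin m) → ℝ) (hδ : ContDiff ℝ 1 δ)
    (φ : ℝ × EuclideanSpace ℝ (Fin m) → EuclideanSpace ℝ (Fin m))
    (hφc : Continuous φ) (hφ0 : ∀ v, φ (0, v) = v)
    (hφ' : ∀ (v : EuclideanSpace ℝ (Fin m)) (s : ℝ),
      HasDerivAt (fun τ => φ (τ, v)) (-gradient δ (φ (s, v))) s)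
    (t₀ t₁ : ℝ)
    (a b : ℝ → ℝ)
    (hbconst : ∀ t ∈ Set.Icc t₀ t₁, b t = b t₀)
    (hamono : StrictMonoOn a (Set.Icc t₀ t₁)) (ha1 : a t₁ = b t₀)
    (hreg : ∃ ε > (0:ℝ), ∃ ρ > (0:ℝ), ∀ v : EuclideanSpace ℝ (Fin m),
      δ v ∈ Set.Icc (a t₀ - ε) (a t₀ + ε) → ρ ≤ ‖gradient δ v‖) :
    let AJ : Set (ℝ × EuclideanSpace ℝ (Fin m)) :=
      {p | p.1 ∈ Set.Icc t₀ t₁ ∧ δ p.2 ≤ a p.1}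
    let BJ : Set (ℝ × EuclideanSpace ℝ (Fin m)) :=
      {p | p.1 ∈ Set.Icc t₀ t₁ ∧ δ p.2 ≤ b p.1}
    let cone : Set (ℝ × EuclideanSpace ℝ (Fin m)) :=
      (Set.Icc t₀ t₁ ×ˢ {v | δ v ≤ a t₀}) ∪ ({t₁} ×ˢ {v | δ v ≤ b t₀})
    ∃ H : ℝ × (ℝ × EuclideanSpace ℝ (Fin m)) → ℝ × EuclideanSpace ℝ (Fin m),
      ContinuousOn H (Set.Icc (0:ℝ) 1 ×ˢ BJ) ∧
      (∀ s ∈ Set.Icc (0:ℝ) 1, ∀ p ∈ BJ, H (s, p) ∈ BJ) ∧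
      (∀ p ∈ BJ, H (0, p) = p) ∧
      (∀ s ∈ Set.Icc (0:ℝ) 1, ∀ p ∈ AJ, H (s, p) ∈ AJ) ∧
      (∀ s ∈ Set.Icc (0:ℝ) 1, ∀ p ∈ Set.Icc t₀ t₁ ×ˢ {v | δ v ≤ a t₀}, H (s, p) = p) ∧
      (∀ p ∈ AJ, H (1, p) ∈ cone) := by
  intro AJ BJ cone
  obtain ⟨ε, hε, ρ, hρ, hband⟩ := hreg
  have hδd : Differentiable ℝ δ := hδ.differentiable one_ne_zero
  have hband' : ∀ v, δ v ∈ Icc (a t₀) (a t₀ + ε) → ρ ≤ ‖gradient δ v‖ :=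
    fun v hv => hband v (Icc_subset_Icc_left (by linarith) hv)
  have hflow_le {s t x} (hs : 0 ≤ s) : δ (coneHomotopy δ φ (a t₀) ε ρ t₁ (s, t, x)).2 ≤ δ x :=
    coneHomotopy_snd_le hδd hφ0 hφ' hε.le hs
  have hfst_mem {s t x} (hs : s ∈ Icc (0 : ℝ) 1) (ht : t ∈ Icc t₀ t₁) :
      (coneHomotopy δ φ (a t₀) ε ρ t₁ (s, t, x)).1 ∈ Icc t₀ t₁ :=
    coneHomotopy_fst_mem hε hs ht
  refine ⟨coneHomotopy δ φ (a t₀) ε ρ t₁,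
    (continuous_coneHomotopy hδ.continuous hφc).continuousOn, ?_,
    fun p _ => coneHomotopy_zero hφ0 p, ?_,
    fun s _ ⟨t, x⟩ ⟨_, hx⟩ => coneHomotopy_of_le hφ0 hε.le hx, ?_⟩
  · rintro s hs ⟨t, x⟩ ⟨ht, hx⟩
    have ht' := hfst_mem (x := x) hs ht
    exact ⟨ht', (hflow_le hs.1).trans (hx.trans_eq ((hbconst t ht).trans (hbconst _ ht').symm))⟩
  · rintro s hs ⟨t, x⟩ ⟨ht, hx⟩
    have ht' := hfst_mem (x := x) hs ht
    exact ⟨ht', (hflow_le hs.1).trans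
      (hx.trans (hamono.monotoneOn ht ht' (le_coneHomotopy_fst hε hs ht.2)))⟩
  · rintro ⟨t, x⟩ ⟨ht, hx⟩
    rcases le_or_gt (δ x) (a t₀ + ε) with hxε | hxε
    · exact Or.inl ⟨hfst_mem ⟨zero_le_one, le_rfl⟩ ht,
        coneHomotopy_one_snd_le hδd hφ0 hφ' hε.le hρ hband' hxε⟩
    · refine Or.inr ⟨coneHomotopy_one_fst hε hxε.le, ?_⟩
      calc _ ≤ δ x := hflow_le zero_le_one
        _ ≤ a t := hx
        _ ≤ b t₀ := ha1 ▸ hamono.monotoneOn ht (right_mem_Icc.2 (ht.1.trans ht.2)) ht.2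

/-- Deformation retraction of `(B_J, A_J)` onto the relative cone
`(J × δ^{b₀}, (J × δ^{a(t₀)}) ∪ ({t₁} × δ^{b₀}))` when `b` is constant on `J`, `a` is
strictly increasing with `a(t₁) = b₀`, and `a(t₀)` has a neighborhood of regular
values of `δ` (gradient bounded away from zero there). -/
theorem stmt_7 (m : ℕ) (δ : EuclideanSpace ℝ (Fin m) → ℝ) (hδ : ContDiff ℝ 1 δ)
    (φ : ℝ × EuclideanSpace ℝ (Fin m) → EuclideanSpace ℝ (Fin m))
    (hφc : Continuous φ) (hφ0 : ∀ v, φ (0, v) = v)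
    (hφ' : ∀ (v : EuclideanSpace ℝ (Fin m)) (s : ℝ),
      HasDerivAt (fun τ => φ (τ, v)) (-gradient δ (φ (s, v))) s)
    (t₀ t₁ : ℝ) (ht : t₀ < t₁)
    (a b : ℝ → ℝ)
    (ha : ContinuousOn a (Set.Icc t₀ t₁)) (hb : ContinuousOn b (Set.Icc t₀ t₁))
    (hbconst : ∀ t ∈ Set.Icc t₀ t₁, b t = b t₀)
    (hamono : StrictMonoOn a (Set.Icc t₀ t₁)) (ha1 : a t₁ = b t₀)
    (hreg : ∃ ε > (0:ℝ), ∃ ρ > (0:ℝ), ∀ v : EuclideanSpace ℝ (Fin m),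
      δ v ∈ Set.Icc (a t₀ - ε) (a t₀ + ε) → ρ ≤ ‖gradient δ v‖) :
    let AJ : Set (ℝ × EuclideanSpace ℝ (Fin m)) :=
      {p | p.1 ∈ Set.Icc t₀ t₁ ∧ δ p.2 ≤ a p.1}
    let BJ : Set (ℝ × EuclideanSpace ℝ (Fin m)) :=
      {p | p.1 ∈ Set.Icc t₀ t₁ ∧ δ p.2 ≤ b p.1}
    let cone : Set (ℝ × EuclideanSpace ℝ (Fin m)) :=
      (Set.Icc t₀ t₁ ×ˢ {v | δ v ≤ a t₀}) ∪ ({t₁} ×ˢ {v | δ v ≤ b t₀})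
    ∃ H : ℝ × (ℝ × EuclideanSpace ℝ (Fin m)) → ℝ × EuclideanSpace ℝ (Fin m),
      ContinuousOn H (Set.Icc (0:ℝ) 1 ×ˢ BJ) ∧
      (∀ s ∈ Set.Icc (0:ℝ) 1, ∀ p ∈ BJ, H (s, p) ∈ BJ) ∧
      (∀ p ∈ BJ, H (0, p) = p) ∧
      (∀ s ∈ Set.Icc (0:ℝ) 1, ∀ p ∈ AJ, H (s, p) ∈ AJ) ∧
      (∀ s ∈ Set.Icc (0:ℝ) 1, ∀ p ∈ Set.Icc t₀ t₁ ×ˢ {v | δ v ≤ a t₀}, H (s, p) = p) ∧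
      (∀ p ∈ AJ, H (1, p) ∈ cone) :=
  stmt_7_general m δ hδ φ hφc hφ0 hφ' t₀ t₁ a b hbconst hamono ha1 hreg
end

section
/- (Fiberwise homotopy equivalence when levels vary through regular values.) Let δ : ℝ^m → ℝ be a continuously differentiable function whose negative gradient flow is globally defined. Fix real numbers t₀ < t₁ and set J = [t₀, t₁]. Let a, ã, b, b̃ : ℝ → ℝ be continuous on J with a(t) ≤ b(t) and ã(t) ≤ b̃(t) for all t ∈ J. Suppose there exist ε > 0 and ρ > 0 such that for every t ∈ J and every v ∈ ℝ^m with δ(v) ∈ [min(a(t),ã(t)) − ε, max(a(t),ã(t)) + ε] ∪ [min(b(t),b̃(t)) − ε, max(b(t),b̃(t)) + ε], one has ‖∇δ(v)‖ ≥ ρ (in particular, there are no critical values of δ between a(t) and ã(t), nor between b(t) and b̃(t)). Then (B_J, A_J) and (B̃_J, Ã_J) are fiberwise homotopy equivalent: there exist continuous maps h : B_J → B̃_J and k : B̃_J → B_J, each preserving the first coordinate t, with h(A_J) ⊆ Ã_J and k(Ã_J) ⊆ A_J, together with homotopies from k∘h to the identity of B_J and from h∘k to the identity of B̃_J that preserve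 the first coordinate at all times and map A_J into A_J (respectively Ã_J into Ã_J) at all times. -/
/-!
Along a negative gradient curve `δ` decreases at rate `‖∇δ‖² ≥ ρ²` as long as it stays in a band
of regular values. Hence, once `ρ² T` exceeds `sup_J (|a - ã| + |b - b̃|)`, the time-`T` flow
carries `{δ ≤ a t}` into `{δ ≤ ã t}` and `{δ ≤ ã t}` into `{δ ≤ a t}` (likewise for `b`, `b̃`),
fibrewise in `t`. Both composites are the flow applied twice, and since flowing for a nonnegative
time preserves every sublevel set, shrinking both flow times from `T` to `0` is a fibrewise
homotopy of pairs to the identity.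
-/

open Set

theorem IsCompact.exists_nonneg_bound_mul {α : Type*} [TopologicalSpace α] {K : Set α}
    (hK : IsCompact K) {f : α → ℝ} (hf : ContinuousOn f K) {c : ℝ} (hc : 0 < c) :
    ∃ T ≥ 0, ∀ t ∈ K, f t ≤ c * T := by
  obtain ⟨C, hC⟩ := hK.exists_bound_of_continuousOn hf
  refine ⟨max C 0 / c, by positivity, fun t ht => ?_⟩
  rw [mul_div_cancel₀ _ hc.ne']
  exact (le_abs_self _).trans ((hC t ht).trans (le_max_left _ _))

section FiberMaps

variable {X : Type*}

def fiberSublevel (δ : X → ℝ) (J : Set ℝ) (c : ℝ → ℝ) : Set (ℝ × X) :=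
  {p | p.1 ∈ J ∧ δ p.2 ≤ c p.1}

def fiberFlow (φ : ℝ × X → X) (s : ℝ) (p : ℝ × X) : ℝ × X :=
  (p.1, φ (s, p.2))

/-- Both factors are flowed back to time `0`, so no group law of the flow is needed. -/
def flowHomotopy (φ : ℝ × X → X) (T : ℝ) (q : ℝ × (ℝ × X)) : ℝ × X :=
  fiberFlow φ ((1 - q.1) * T) (fiberFlow φ ((1 - q.1) * T) q.2)

variable {φ : ℝ × X → X}

theorem flowHomotopy_zero (T : ℝ) (p : ℝ × X) :
    flowHomotopy φ T (0, p) = fiberFlow φ T (fiberFlow φ T p) := by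
  simp [flowHomotopy]

theorem flowHomotopy_one (hφ0 : ∀ v, φ (0, v) = v) (T : ℝ) (p : ℝ × X) :
    flowHomotopy φ T (1, p) = p := by
  simp [flowHomotopy, fiberFlow, hφ0]

variable [TopologicalSpace X]

theorem continuous_fiberFlow (hφ : Continuous φ) (s : ℝ) : Continuous (fiberFlow φ s) := by
  unfold fiberFlow; fun_prop

theorem continuous_flowHomotopy (hφ : Continuous φ) (T : ℝ) :
    Continuous (flowHomotopy φ T) := by
  unfold flowHomotopy fiberFlow; fun_prop

end FiberMaps

variable {E : Type*} [NormedAddCommGroup E] [InnerProductSpace ℝ E] [CompleteSpace E]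

def IsNegGradientCurve (δ : E → ℝ) (γ : ℝ → E) : Prop :=
  ∀ s, HasDerivAt γ (-gradient δ (γ s)) s

namespace IsNegGradientCurve

variable {δ : E → ℝ} {γ : ℝ → E}

theorem hasDerivAt_comp (hγ : IsNegGradientCurve δ γ) (hδ : Differentiable ℝ δ) (s : ℝ) :
    HasDerivAt (fun τ => δ (γ τ)) (-‖gradient δ (γ s)‖ ^ 2) s := by
  refine ((hδ (γ s)).hasGradientAt.hasFDerivAt.comp_hasDerivAt s (hγ s)).congr_deriv ?_
  rw [InnerProductSpace.toDual_apply_apply, inner_neg_right, real_inner_self_eq_norm_sq]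

theorem antitone_comp (hγ : IsNegGradientCurve δ γ) (hδ : Differentiable ℝ δ) :
    Antitone fun τ => δ (γ τ) :=
  antitone_of_deriv_nonpos (fun s => (hγ.hasDerivAt_comp hδ s).differentiableAt) fun s => by
    rw [(hγ.hasDerivAt_comp hδ s).deriv]
    exact neg_nonpos.2 (sq_nonneg _)

theorem le_of_gradient_bound (hγ : IsNegGradientCurve δ γ) (hδ : Differentiable ℝ δ)
    {y z ρ T : ℝ} (hρ : 0 ≤ ρ) (hT : 0 ≤ T)
    (hband : ∀ v, δ v ∈ Icc z y → ρ ≤ ‖gradient δ v‖) (hyz : y - z ≤ ρ ^ 2 * T)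
    (h0 : δ (γ 0) ≤ y) : δ (γ T) ≤ z := by
  refine le_of_not_gt fun hzT => ?_
  have hanti := hγ.antitone_comp hδ
  have hderiv := hγ.hasDerivAt_comp hδ
  have hslope : ∀ s ∈ interior (Icc 0 T), deriv (fun τ => δ (γ τ)) s ≤ -ρ ^ 2 := by
    intro s hs
    rw [interior_Icc] at hs
    have hρs : ρ ≤ ‖gradient δ (γ s)‖ :=
      hband _ ⟨hzT.le.trans (hanti hs.2.le), (hanti hs.1.le).trans h0⟩
    rw [(hderiv s).deriv, neg_le_neg_iff]
    exact pow_le_pow_left₀ hρ hρs 2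
  have hdrop := (convex_Icc 0 T).image_sub_le_mul_sub_of_deriv_le
    (fun s _ => (hderiv s).continuousAt.continuousWithinAt)
    (fun s _ => (hderiv s).differentiableAt.differentiableWithinAt) hslope
    0 (left_mem_Icc.2 hT) T (right_mem_Icc.2 hT) hT
  linarith

end IsNegGradientCurve

section GradientFlow

variable {δ : E → ℝ} {φ : ℝ × E → E} {J : Set ℝ}

theorem mapsTo_fiberFlow (hδ : Differentiable ℝ δ)
    (hφ : ∀ v, IsNegGradientCurve δ fun τ => φ (τ, v)) (hφ0 : ∀ v, φ (0, v) = v)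
    {c c' : ℝ → ℝ} {ρ T : ℝ} (hρ : 0 ≤ ρ) (hT : 0 ≤ T)
    (hband : ∀ t ∈ J, ∀ v, δ v ∈ uIcc (c t) (c' t) → ρ ≤ ‖gradient δ v‖)
    (hgap : ∀ t ∈ J, |c t - c' t| ≤ ρ ^ 2 * T) :
    MapsTo (fiberFlow φ T) (fiberSublevel δ J c) (fiberSublevel δ J c') := by
  rintro ⟨t, v⟩ ⟨ht, hv⟩
  refine ⟨ht, (hφ v).le_of_gradient_bound hδ hρ hT
    (fun w hw => hband t ht w (Icc_subset_uIcc' hw)) ((le_abs_self _).trans (hgap t ht)) ?_⟩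
  rwa [hφ0]

theorem fiberFlow_mem_fiberSublevel (hδ : Differentiable ℝ δ)
    (hφ : ∀ v, IsNegGradientCurve δ fun τ => φ (τ, v)) (hφ0 : ∀ v, φ (0, v) = v)
    {c : ℝ → ℝ} {s : ℝ} (hs : 0 ≤ s) {p : ℝ × E} (hp : p ∈ fiberSublevel δ J c) :
    fiberFlow φ s p ∈ fiberSublevel δ J c := by
  refine ⟨hp.1, le_trans ?_ hp.2⟩
  simpa [fiberFlow, hφ0] using (hφ p.2).antitone_comp hδ hs

theorem flowHomotopy_mem_fiberSublevel (hδ : Differentiable ℝ δ)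
    (hφ : ∀ v, IsNegGradientCurve δ fun τ => φ (τ, v)) (hφ0 : ∀ v, φ (0, v) = v)
    {c : ℝ → ℝ} {T : ℝ} (hT : 0 ≤ T) :
    ∀ s ∈ Icc (0 : ℝ) 1, ∀ p ∈ fiberSublevel δ J c,
      flowHomotopy φ T (s, p) ∈ fiberSublevel δ J c :=
  fun s hs _ hp =>
    have hsT : 0 ≤ (1 - s) * T := mul_nonneg (sub_nonneg.2 hs.2) hT
    fiberFlow_mem_fiberSublevel hδ hφ hφ0 hsT (fiberFlow_mem_fiberSublevel hδ hφ hφ0 hsT hp)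

end GradientFlow

theorem stmt_8_general (m : ℕ) (δ : EuclideanSpace ℝ (Fin m) → ℝ) (hδ : ContDiff ℝ 1 δ)
    (φ : ℝ × EuclideanSpace ℝ (Fin m) → EuclideanSpace ℝ (Fin m))
    (hφc : Continuous φ) (hφ0 : ∀ v, φ (0, v) = v)
    (hφ' : ∀ (v : EuclideanSpace ℝ (Fin m)) (s : ℝ),
      HasDerivAt (fun τ => φ (τ, v)) (-gradient δ (φ (s, v))) s)
    (t₀ t₁ : ℝ)
    (a at' b bt : ℝ → ℝ)
    (ha : ContinuousOn a (Set.Icc t₀ t₁)) (hat : ContinuousOn at' (Set.Icc t₀ t₁))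
    (hb : ContinuousOn b (Set.Icc t₀ t₁)) (hbt : ContinuousOn bt (Set.Icc t₀ t₁))
    (hreg : ∃ ε > (0:ℝ), ∃ ρ > (0:ℝ), ∀ t ∈ Set.Icc t₀ t₁,
      ∀ v : EuclideanSpace ℝ (Fin m),
        δ v ∈ Set.Icc (min (a t) (at' t) - ε) (max (a t) (at' t) + ε) ∪
              Set.Icc (min (b t) (bt t) - ε) (max (b t) (bt t) + ε) →
          ρ ≤ ‖gradient δ v‖) :
    let AJ : Set (ℝ × EuclideanSpace ℝ (Fin m)) :=
      {p | p.1 ∈ Set.Icc t₀ t₁ ∧ δ p.2 ≤ a p.1}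
    let BJ : Set (ℝ × EuclideanSpace ℝ (Fin m)) :=
      {p | p.1 ∈ Set.Icc t₀ t₁ ∧ δ p.2 ≤ b p.1}
    let AtJ : Set (ℝ × EuclideanSpace ℝ (Fin m)) :=
      {p | p.1 ∈ Set.Icc t₀ t₁ ∧ δ p.2 ≤ at' p.1}
    let BtJ : Set (ℝ × EuclideanSpace ℝ (Fin m)) :=
      {p | p.1 ∈ Set.Icc t₀ t₁ ∧ δ p.2 ≤ bt p.1}
    ∃ h k : ℝ × EuclideanSpace ℝ (Fin m) → ℝ × EuclideanSpace ℝ (Fin m),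
    ∃ Hkh Hhk : ℝ × (ℝ × EuclideanSpace ℝ (Fin m)) → ℝ × EuclideanSpace ℝ (Fin m),
      -- h : (B_J, A_J) → (B̃_J, Ã_J), preserving the first coordinate
      ContinuousOn h BJ ∧ Set.MapsTo h BJ BtJ ∧ Set.MapsTo h AJ AtJ ∧
      (∀ p ∈ BJ, (h p).1 = p.1) ∧
      -- k : (B̃_J, Ã_J) → (B_J, A_J), preserving the first coordinate
      ContinuousOn k BtJ ∧ Set.MapsTo k BtJ BJ ∧ Set.MapsTo k AtJ AJ ∧
      (∀ p ∈ BtJ, (k p).1 = p.1) ∧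
      -- homotopy from k ∘ h to the identity of B_J
      ContinuousOn Hkh (Set.Icc (0:ℝ) 1 ×ˢ BJ) ∧
      (∀ s ∈ Set.Icc (0:ℝ) 1, ∀ p ∈ BJ, Hkh (s, p) ∈ BJ) ∧
      (∀ s ∈ Set.Icc (0:ℝ) 1, ∀ p ∈ AJ, Hkh (s, p) ∈ AJ) ∧
      (∀ s ∈ Set.Icc (0:ℝ) 1, ∀ p ∈ BJ, (Hkh (s, p)).1 = p.1) ∧
      (∀ p ∈ BJ, Hkh (0, p) = k (h p)) ∧
      (∀ p ∈ BJ, Hkh (1, p) = p) ∧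
      -- homotopy from h ∘ k to the identity of B̃_J
      ContinuousOn Hhk (Set.Icc (0:ℝ) 1 ×ˢ BtJ) ∧
      (∀ s ∈ Set.Icc (0:ℝ) 1, ∀ p ∈ BtJ, Hhk (s, p) ∈ BtJ) ∧
      (∀ s ∈ Set.Icc (0:ℝ) 1, ∀ p ∈ AtJ, Hhk (s, p) ∈ AtJ) ∧
      (∀ s ∈ Set.Icc (0:ℝ) 1, ∀ p ∈ BtJ, (Hhk (s, p)).1 = p.1) ∧
      (∀ p ∈ BtJ, Hhk (0, p) = h (k p)) ∧
      (∀ p ∈ BtJ, Hhk (1, p) = p) := by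
  intro AJ BJ AtJ BtJ
  obtain ⟨ε, hε, ρ, hρ, hreg⟩ := hreg
  have hδ' : Differentiable ℝ δ := hδ.differentiable one_ne_zero
  have widen : ∀ x y : ℝ, uIcc x y ⊆ Icc (min x y - ε) (max x y + ε) := fun x y =>
    Icc_subset_Icc (sub_le_self _ hε.le) (le_add_of_nonneg_right hε.le)
  have hA : ∀ t ∈ Icc t₀ t₁, ∀ v, δ v ∈ uIcc (a t) (at' t) → ρ ≤ ‖gradient δ v‖ :=
    fun t ht v hv => hreg t ht v (Or.inl (widen _ _ hv))
  have hB : ∀ t ∈ Icc t₀ t₁, ∀ v, δ v ∈ uIcc (b t) (bt t) → ρ ≤ ‖gradient δ v‖ :=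
    fun t ht v hv => hreg t ht v (Or.inr (widen _ _ hv))
  obtain ⟨T, hT0, hT⟩ := isCompact_Icc.exists_nonneg_bound_mul
    (f := fun t => |a t - at' t| + |b t - bt t|) (by fun_prop) (pow_pos hρ 2)
  have hTa : ∀ t ∈ Icc t₀ t₁, |a t - at' t| ≤ ρ ^ 2 * T := fun t ht => by
    linarith [hT t ht, abs_nonneg (b t - bt t)]
  have hTb : ∀ t ∈ Icc t₀ t₁, |b t - bt t| ≤ ρ ^ 2 * T := fun t ht => by
    linarith [hT t ht, abs_nonneg (a t - at' t)]
  have flow := fun {c c' : ℝ → ℝ} => mapsTo_fiberFlow (J := Icc t₀ t₁) (c := c) (c' := c')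
    hδ' hφ' hφ0 hρ.le hT0
  have stay := fun {c : ℝ → ℝ} =>
    flowHomotopy_mem_fiberSublevel (J := Icc t₀ t₁) (c := c) hδ' hφ' hφ0 hT0
  refine ⟨fiberFlow φ T, fiberFlow φ T, flowHomotopy φ T, flowHomotopy φ T,
    (continuous_fiberFlow hφc T).continuousOn, flow hB hTb, flow hA hTa, fun _ _ => rfl,
    (continuous_fiberFlow hφc T).continuousOn,
    flow (by simpa only [uIcc_comm] using hB) (by simpa only [abs_sub_comm] using hTb),
    flow (by simpa only [uIcc_comm] using hA) (by simpa only [abs_sub_comm] using hTa),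
    fun _ _ => rfl,
    (continuous_flowHomotopy hφc T).continuousOn, stay, stay, fun _ _ _ _ => rfl,
    fun p _ => flowHomotopy_zero T p, fun p _ => flowHomotopy_one hφ0 T p,
    (continuous_flowHomotopy hφc T).continuousOn, stay, stay, fun _ _ _ _ => rfl,
    fun p _ => flowHomotopy_zero T p, fun p _ => flowHomotopy_one hφ0 T p⟩

/-- Fiberwise homotopy equivalence of `(B_J, A_J)` and `(B̃_J, Ã_J)` when the levels
vary only through regular values of `δ`. -/
theorem stmt_8 (m : ℕ) (δ : EuclideanSpace ℝ (Fin m) → ℝ) (hδ : ContDiff ℝ 1 δ)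
    (φ : ℝ × EuclideanSpace ℝ (Fin m) → EuclideanSpace ℝ (Fin m))
    (hφc : Continuous φ) (hφ0 : ∀ v, φ (0, v) = v)
    (hφ' : ∀ (v : EuclideanSpace ℝ (Fin m)) (s : ℝ),
      HasDerivAt (fun τ => φ (τ, v)) (-gradient δ (φ (s, v))) s)
    (t₀ t₁ : ℝ) (ht : t₀ < t₁)
    (a at' b bt : ℝ → ℝ)
    (ha : ContinuousOn a (Set.Icc t₀ t₁)) (hat : ContinuousOn at' (Set.Icc t₀ t₁))
    (hb : ContinuousOn b (Set.Icc t₀ t₁)) (hbt : ContinuousOn bt (Set.Icc t₀ t₁))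
    (hab : ∀ t ∈ Set.Icc t₀ t₁, a t ≤ b t)
    (habt : ∀ t ∈ Set.Icc t₀ t₁, at' t ≤ bt t)
    (hreg : ∃ ε > (0:ℝ), ∃ ρ > (0:ℝ), ∀ t ∈ Set.Icc t₀ t₁,
      ∀ v : EuclideanSpace ℝ (Fin m),
        δ v ∈ Set.Icc (min (a t) (at' t) - ε) (max (a t) (at' t) + ε) ∪
              Set.Icc (min (b t) (bt t) - ε) (max (b t) (bt t) + ε) →
          ρ ≤ ‖gradient δ v‖) :
    let AJ : Set (ℝ × EuclideanSpace ℝ (Fin m)) :=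
      {p | p.1 ∈ Set.Icc t₀ t₁ ∧ δ p.2 ≤ a p.1}
    let BJ : Set (ℝ × EuclideanSpace ℝ (Fin m)) :=
      {p | p.1 ∈ Set.Icc t₀ t₁ ∧ δ p.2 ≤ b p.1}
    let AtJ : Set (ℝ × EuclideanSpace ℝ (Fin m)) :=
      {p | p.1 ∈ Set.Icc t₀ t₁ ∧ δ p.2 ≤ at' p.1}
    let BtJ : Set (ℝ × EuclideanSpace ℝ (Fin m)) :=
      {p | p.1 ∈ Set.Icc t₀ t₁ ∧ δ p.2 ≤ bt p.1}
    ∃ h k : ℝ × EuclideanSpace ℝ (Fin m) → ℝ × EuclideanSpace ℝ (Fin m),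
    ∃ Hkh Hhk : ℝ × (ℝ × EuclideanSpace ℝ (Fin m)) → ℝ × EuclideanSpace ℝ (Fin m),
      -- h : (B_J, A_J) → (B̃_J, Ã_J), preserving the first coordinate
      ContinuousOn h BJ ∧ Set.MapsTo h BJ BtJ ∧ Set.MapsTo h AJ AtJ ∧
      (∀ p ∈ BJ, (h p).1 = p.1) ∧
      -- k : (B̃_J, Ã_J) → (B_J, A_J), preserving the first coordinate
      ContinuousOn k BtJ ∧ Set.MapsTo k BtJ BJ ∧ Set.MapsTo k AtJ AJ ∧
      (∀ p ∈ BtJ, (k p).1 = p.1) ∧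
      -- homotopy from k ∘ h to the identity of B_J
      ContinuousOn Hkh (Set.Icc (0:ℝ) 1 ×ˢ BJ) ∧
      (∀ s ∈ Set.Icc (0:ℝ) 1, ∀ p ∈ BJ, Hkh (s, p) ∈ BJ) ∧
      (∀ s ∈ Set.Icc (0:ℝ) 1, ∀ p ∈ AJ, Hkh (s, p) ∈ AJ) ∧
      (∀ s ∈ Set.Icc (0:ℝ) 1, ∀ p ∈ BJ, (Hkh (s, p)).1 = p.1) ∧
      (∀ p ∈ BJ, Hkh (0, p) = k (h p)) ∧
      (∀ p ∈ BJ, Hkh (1, p) = p) ∧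
      -- homotopy from h ∘ k to the identity of B̃_J
      ContinuousOn Hhk (Set.Icc (0:ℝ) 1 ×ˢ BtJ) ∧
      (∀ s ∈ Set.Icc (0:ℝ) 1, ∀ p ∈ BtJ, Hhk (s, p) ∈ BtJ) ∧
      (∀ s ∈ Set.Icc (0:ℝ) 1, ∀ p ∈ AtJ, Hhk (s, p) ∈ AtJ) ∧
      (∀ s ∈ Set.Icc (0:ℝ) 1, ∀ p ∈ BtJ, (Hhk (s, p)).1 = p.1) ∧
      (∀ p ∈ BtJ, Hhk (0, p) = h (k p)) ∧
      (∀ p ∈ BtJ, Hhk (1, p) = p) :=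
  stmt_8_general m δ hδ φ hφc hφ0 hφ' t₀ t₁ a at' b bt ha hat hb hbt hreg
end
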